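/- Let φ = (φ₀,…,φ_m) : ℝ → ℝ^{m+1} be bounded, measurable, and satisfy φ = Tφ pointwise on ℝ. Then: (a) for j = 1,…,m, φ_j is continuous on ℝ; (b) φ₀ is left-continuous at every point of ℝ and continuous at every t ∉ {θ_i : i ∈ ℤ}; (c) at every t ∉ {θ_i : i ∈ ℤ}, φ₀ and each φ_j are differentiable with φ₀'(t) = −k₀·φ₀(t) − g₀(φ₀(t)−φ₁(t), …, φ₀(t)−φ_m(t)) and φ_j'(t) = −k_j·φ_j(t) + g_j(φ₀(t)−φ_j(t)); (d) at every θ_i (i ∈ ℤ) the right limit φ₀(θ_i⁺) := lim_{s→θ_i⁺} φ₀(s) exists and φ₀(θ_i⁺) − φ₀(θ_i) = I₀ + J₀(φ₀(θ_i)). In other words, a bounded solution of the integral equation is a bounded solution of the impulsive differential system (1). -/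

import Mathlib

/-- The Euclidean norm on `Fin n → ℝ`. -/
noncomputable def eNorm {n : ℕ} (v : Fin n → ℝ) : ℝ := Real.sqrt (∑ j, v j ^ 2)

/-- The operator `T` of the paper: coordinate `0` (the systemic arterial pressure) gets
`(Tφ)₀(t) = −∫_{−∞}^t e^{−k₀(t−s)} g₀(φ₀(s)−φ₁(s),…,φ₀(s)−φ_m(s)) ds
  + Σ_{θ_i < t} e^{−k₀(t−θ_i)} (I₀ + J₀(φ₀(θ_i)))`,
and the compartment coordinates `j = 1,…,m` (nonzero indices of `Fin (m+1)`) get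
`(Tφ)_j(t) = ∫_{−∞}^t e^{−k_j(t−s)} g_j(φ₀(s)−φ_j(s)) ds`. -/
noncomputable def Tmap (m : ℕ) (θ : ℤ → ℝ) (k : Fin (m + 1) → ℝ) (I₀ : ℝ)
    (g₀ : (Fin m → ℝ) → ℝ) (g : Fin (m + 1) → ℝ → ℝ) (J₀ : ℝ → ℝ)
    (φ : ℝ → Fin (m + 1) → ℝ) : ℝ → Fin (m + 1) → ℝ := fun t j =>
  if j = 0 then
    -(∫ s in Set.Iic t, Real.exp (-(k 0) * (t - s)) * g₀ (fun i => φ s 0 - φ s i.succ))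
      + ∑' i : ℤ, (if θ i < t then Real.exp (-(k 0) * (t - θ i)) * (I₀ + J₀ (φ (θ i) 0)) else 0)
  else
    ∫ s in Set.Iic t, Real.exp (-(k j) * (t - s)) * g j (φ s 0 - φ s j)

/-- The set `Ω`: bounded measurable functions `φ : ℝ → ℝ^{m+1}` with
`|φ₀(t)| ≤ m₀/k₀ + (I₀ + m_J)·e^{k₀ω}/(1 − e^{−k₀ω})` and `|φ_j(t)| ≤ m_j/k_j`. -/
def OmegaSet (m : ℕ) (ω : ℝ) (k mc : Fin (m + 1) → ℝ) (I₀ mJ : ℝ) :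
    Set (ℝ → Fin (m + 1) → ℝ) :=
  {φ | Measurable φ ∧ (∃ B, ∀ t, eNorm (φ t) ≤ B) ∧ ∀ t,
    |φ t 0| ≤ mc 0 / k 0 + (I₀ + mJ) * Real.exp (k 0 * ω) / (1 - Real.exp (-(k 0) * ω)) ∧
    ∀ j, j ≠ 0 → |φ t j| ≤ mc j / k j}

/-!
A fixed point of `T` has the form `φ_j = F_j` and `φ₀ = -F₀ + S`, where
`F(t) = ∫_{-∞}^t e^{-c(t-s)} h(s) ds` for a bounded measurable `h` and
`S(t) = Σ_{θ_i < t} e^{-k₀(t-θ_i)} a_i`. Since `F(t) = e^{-ct} ∫_{-∞}^t e^{cs} h(s) ds`, `F` is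
continuous and, by the fundamental theorem of calculus, `F' = -cF + h` wherever `h` is continuous.
On each interval `(θ_M, θ_{M+1}]` the sum `S(t)` is `e^{-k₀t}` times the constant
`Σ_{i ≤ M} e^{k₀θ_i} a_i` (a convergent geometric-type sum by (C4)), so `S` is left-continuous,
smooth off the `θ_i`, and jumps by `a_i` at `θ_i`. Continuity of the `φ_j`, and of `φ₀` off the
`θ_i`, makes the integrands continuous there, which gives the differential equations.
-/

open MeasureTheory Real Set Filter Topology

lemma continuous_of_abs_sub_le {X : Type*} [TopologicalSpace X] {f : X → ℝ} (ρ : X → X → ℝ)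
    (hρ : ∀ x, ContinuousAt (ρ · x) x) (hρx : ∀ x, ρ x x = 0) (h : ∀ y x, |f y - f x| ≤ ρ y x) :
    Continuous f := by
  refine continuous_iff_continuousAt.2 fun x => ?_
  rw [ContinuousAt, tendsto_iff_norm_sub_tendsto_zero]
  refine squeeze_zero (fun _ => norm_nonneg _) (fun y => h y x) ?_
  simpa [hρx] using (hρ x).tendsto

lemma continuous_of_abs_sub_le_mul_abs {f : ℝ → ℝ} {L : ℝ}
    (h : ∀ a b, |f a - f b| ≤ L * |a - b|) : Continuous f :=
  continuous_of_abs_sub_le (fun a b => L * |a - b|) (fun _ => by fun_prop) (by simp) h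

lemma continuous_of_abs_sub_le_mul_eNorm {n : ℕ} {f : (Fin n → ℝ) → ℝ} {L : ℝ}
    (h : ∀ z w, |f z - f w| ≤ L * eNorm (fun i => z i - w i)) : Continuous f :=
  continuous_of_abs_sub_le (fun z w => L * eNorm fun i => z i - w i)
    (fun _ => by unfold eNorm; exact Continuous.continuousAt (by fun_prop)) (by simp [eNorm]) h

section IntegralIic

variable {f : ℝ → ℝ}

lemma integral_Iic_eq_add_intervalIntegral (hf : ∀ t, IntegrableOn f (Iic t)) (a t : ℝ) :
    ∫ s in Iic t, f s = (∫ s in Iic a, f s) + ∫ s in a..t, f s := by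
  rw [← intervalIntegral.integral_Iic_sub_Iic (hf a) (hf t)]
  ring

lemma intervalIntegrable_of_integrableOn_Iic (hf : ∀ t, IntegrableOn f (Iic t)) (a b : ℝ) :
    IntervalIntegrable f volume a b :=
  ((hf (max a b)).mono_set fun _ hx => hx.2).intervalIntegrable

lemma continuous_integral_Iic (hf : ∀ t, IntegrableOn f (Iic t)) :
    Continuous fun t => ∫ s in Iic t, f s := by
  rw [funext (integral_Iic_eq_add_intervalIntegral hf 0)]
  exact continuous_const.add
    (intervalIntegral.continuous_primitive (intervalIntegrable_of_integrableOn_Iic hf) 0)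

lemma hasDerivAt_integral_Iic (hf : ∀ t, IntegrableOn f (Iic t)) (hfm : Measurable f) {t : ℝ}
    (hft : ContinuousAt f t) : HasDerivAt (fun u => ∫ s in Iic u, f s) (f t) t := by
  rw [funext (integral_Iic_eq_add_intervalIntegral hf 0)]
  exact (intervalIntegral.integral_hasDerivAt_right
    (intervalIntegrable_of_integrableOn_Iic hf 0 t)
    hfm.stronglyMeasurable.stronglyMeasurableAtFilter hft).const_add _

end IntegralIic

noncomputable def expKernelIntegral (c : ℝ) (h : ℝ → ℝ) (t : ℝ) : ℝ :=
  ∫ s in Iic t, exp (-c * (t - s)) * h s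

section expKernelIntegral

variable {c C : ℝ} {h : ℝ → ℝ}

lemma expKernelIntegral_eq (c : ℝ) (h : ℝ → ℝ) (t : ℝ) :
    expKernelIntegral c h t = exp (-c * t) * ∫ s in Iic t, exp (c * s) * h s := by
  rw [expKernelIntegral, ← integral_const_mul]
  congr 1 with s
  rw [← mul_assoc, ← exp_add]
  ring_nf

variable (hc : 0 < c) (hh : Measurable h) (hC : ∀ s, |h s| ≤ C)
include hc hh hC

lemma integrableOn_exp_mul_mul_Iic (t : ℝ) :
    IntegrableOn (fun s => exp (c * s) * h s) (Iic t) :=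
  (integrableOn_exp_mul_Iic hc t).mul_bdd hh.aestronglyMeasurable (ae_of_all _ hC)

lemma continuous_expKernelIntegral : Continuous (expKernelIntegral c h) := by
  rw [funext (expKernelIntegral_eq c h)]
  exact (by fun_prop : Continuous fun t => exp (-c * t)).mul
    (continuous_integral_Iic (integrableOn_exp_mul_mul_Iic hc hh hC))

lemma hasDerivAt_expKernelIntegral {t : ℝ} (ht : ContinuousAt h t) :
    HasDerivAt (expKernelIntegral c h) (-c * expKernelIntegral c h t + h t) t := by
  have hG := hasDerivAt_integral_Iic (integrableOn_exp_mul_mul_Iic hc hh hC) (by fun_prop)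
    ((continuous_exp.comp (continuous_const_mul c)).continuousAt.mul ht)
  have hE : HasDerivAt (fun u => exp (-c * u)) (exp (-c * t) * -c) t := by
    simpa using ((hasDerivAt_id t).const_mul (-c)).exp
  rw [funext (expKernelIntegral_eq c h)]
  refine (hE.mul hG).congr_deriv ?_
  rw [← mul_assoc (exp (-c * t)), ← exp_add, show -c * t + c * t = 0 by ring, exp_zero]
  ring

end expKernelIntegral

noncomputable def impulseSum (c : ℝ) (θ a : ℤ → ℝ) (t : ℝ) : ℝ :=
  ∑' i, if θ i < t then exp (-c * (t - θ i)) * a i else 0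

lemma tsum_indicator_Iic_eq_add {b : ℤ → ℝ} {M : ℤ} (hb : Summable ((Iic M).indicator b)) :
    ∑' i, (Iic M).indicator b i = ∑' i, (Iic (M - 1)).indicator b i + b M := by
  rw [hb.tsum_eq_add_tsum_ite M, indicator_of_mem (mem_Iic.2 le_rfl), add_comm]
  congr 2 with i
  by_cases hi : i = M
  · simp [hi]
  · simp only [hi, if_false, indicator, mem_Iic]
    congr 1
    exact propext ⟨fun _ => by omega, fun _ => by omega⟩

section impulseSum

variable {θ : ℤ → ℝ} (hθ : StrictMono θ) (c : ℝ) (a : ℤ → ℝ) {t : ℝ}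
include hθ

lemma impulseSum_eq_of_mem_Ioc {M : ℤ} (ht : t ∈ Ioc (θ M) (θ (M + 1))) :
    impulseSum c θ a t =
      exp (-c * t) * ∑' i, (Iic M).indicator (fun i => exp (c * θ i) * a i) i := by
  have hlt : ∀ i, θ i < t ↔ i ≤ M := fun i =>
    ⟨fun h => Int.lt_add_one_iff.1 (hθ.lt_iff_lt.1 (h.trans_le ht.2)),
      fun h => (hθ.monotone h).trans_lt ht.1⟩
  rw [impulseSum, ← tsum_mul_left]
  congr 1 with i
  by_cases hi : i ≤ M
  · rw [if_pos ((hlt i).2 hi), indicator_of_mem (mem_Iic.2 hi), ← mul_assoc, ← exp_add]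
    ring_nf
  · rw [if_neg (mt (hlt i).1 hi), indicator_of_notMem (mt mem_Iic.1 hi), mul_zero]

lemma tendsto_impulseSum_nhdsGT
    (hsum : ∀ M, Summable ((Iic M).indicator fun i => exp (c * θ i) * a i)) (i : ℤ) :
    Tendsto (impulseSum c θ a) (𝓝[>] θ i) (𝓝 (impulseSum c θ a (θ i) + a i)) := by
  have hprev : θ i ∈ Ioc (θ (i - 1)) (θ (i - 1 + 1)) := by
    rw [sub_add_cancel]; exact ⟨hθ (sub_one_lt i), le_rfl⟩
  have hlim : exp (-c * θ i) * ∑' j, (Iic i).indicator (fun j => exp (c * θ j) * a j) j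
      = impulseSum c θ a (θ i) + a i := by
    rw [impulseSum_eq_of_mem_Ioc hθ c a hprev, tsum_indicator_Iic_eq_add (hsum i),
      mul_add, ← mul_assoc, ← exp_add, show -c * θ i + c * θ i = 0 by ring, exp_zero, one_mul]
  rw [← hlim]
  refine ((continuous_exp.comp (continuous_const_mul (-c))).mul continuous_const).continuousAt
    |>.tendsto |>.mono_left nhdsWithin_le_nhds |>.congr' ?_
  exact eventually_of_mem (Ioc_mem_nhdsGT (hθ (lt_add_one i))) fun _ hs =>
    (impulseSum_eq_of_mem_Ioc hθ c a hs).symm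

variable (hcover : ∀ t, ∃ M, t ∈ Ioc (θ M) (θ (M + 1)))
include hcover

lemma continuousWithinAt_Iic_impulseSum (t : ℝ) :
    ContinuousWithinAt (impulseSum c θ a) (Iic t) t := by
  obtain ⟨M, hM⟩ := hcover t
  exact (continuous_exp.comp (continuous_const_mul (-c)) |>.mul continuous_const).continuousWithinAt
    |>.congr_of_eventuallyEq (eventually_of_mem (Ioc_mem_nhdsLE_of_mem hM)
      fun _ hs => impulseSum_eq_of_mem_Ioc hθ c a hs) (impulseSum_eq_of_mem_Ioc hθ c a hM)

lemma hasDerivAt_impulseSum (ht : ∀ i, t ≠ θ i) :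
    HasDerivAt (impulseSum c θ a) (-c * impulseSum c θ a t) t := by
  obtain ⟨M, hM⟩ := hcover t
  have hM' : t ∈ Ioo (θ M) (θ (M + 1)) := ⟨hM.1, hM.2.lt_of_ne (ht _)⟩
  have hE : HasDerivAt (fun u => exp (-c * u)) (exp (-c * t) * -c) t := by
    simpa using ((hasDerivAt_id t).const_mul (-c)).exp
  refine (hE.mul_const _).congr_of_eventuallyEq
    (eventually_of_mem (Ioo_mem_nhds hM'.1 hM'.2) fun _ hs =>
      impulseSum_eq_of_mem_Ioc hθ c a (Ioo_subset_Ioc_self hs)) |>.congr_deriv ?_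
  rw [impulseSum_eq_of_mem_Ioc hθ c a hM]
  ring

end impulseSum

lemma summable_indicator_Iic_exp_mul_intCast {r : ℝ} (hr : 0 < r) (M : ℤ) :
    Summable ((Iic M).indicator fun i : ℤ => exp (r * i)) := by
  have hinj : Function.Injective fun n : ℕ => M - n := fun m n h => by simpa using h
  refine (hinj.summable_iff fun i hi => indicator_of_notMem (fun hiM => hi ⟨(M - i).toNat, by
    simp only [mem_Iic] at hiM ⊢; omega⟩) _).1 ?_
  have hgeom := (Real.summable_exp_nat_mul_iff.2 (neg_lt_zero.2 hr)).mul_left (exp (r * M))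
  refine hgeom.congr fun n => ?_
  rw [Function.comp_apply, indicator_of_mem (by simp), ← exp_add]
  push_cast
  ring_nf

section PeriodicImpulses

variable {ω : ℝ} {θ : ℤ → ℝ} (hθ : ∀ i : ℤ, θ i ∈ Ico ((i : ℝ) * ω) (((i : ℝ) + 1) * ω))
include hθ

lemma strictMono_of_mem_Ico : StrictMono θ := by
  refine strictMono_int_of_lt_succ fun i => (hθ i).2.trans_le ?_
  exact_mod_cast (hθ (i + 1)).1

lemma exists_mem_Ioc_of_mem_Ico (hω : 0 < ω) (t : ℝ) : ∃ M, t ∈ Ioc (θ M) (θ (M + 1)) := by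
  have hbdd : ∃ b : ℤ, ∀ i, θ i < t → i ≤ b := ⟨⌊t / ω⌋, fun i hi =>
    Int.le_floor.2 ((le_div_iff₀ hω).2 ((hθ i).1.trans hi.le))⟩
  have hne : ∃ i, θ i < t := ⟨⌊t / ω⌋ - 1, by
    refine (hθ _).2.trans_le ?_
    push_cast
    rw [sub_add_cancel, ← le_div_iff₀ hω]
    exact Int.floor_le _⟩
  obtain ⟨M, hM, hmax⟩ := Int.exists_greatest_of_bdd hbdd hne
  exact ⟨M, hM, not_lt.1 fun h => by have := hmax _ h; omega⟩

lemma summable_indicator_Iic_exp_mul_mul {c A : ℝ} (hω : 0 < ω) (hc : 0 < c) {a : ℤ → ℝ}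
    (ha : ∀ i, |a i| ≤ A) (M : ℤ) :
    Summable ((Iic M).indicator fun i => exp (c * θ i) * a i) := by
  refine .of_norm_bounded
    ((summable_indicator_Iic_exp_mul_intCast (mul_pos hc hω) M).mul_left (A * exp (c * ω)))
    fun i => ?_
  by_cases hi : i ∈ Iic M
  · simp only [indicator_of_mem hi, norm_mul, norm_eq_abs, abs_exp]
    calc exp (c * θ i) * |a i| ≤ exp (c * ω * i + c * ω) * A := by
          refine mul_le_mul (exp_le_exp.2 ?_) (ha i) (abs_nonneg _) (exp_pos _).le
          nlinarith [(hθ i).2]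
      _ = A * exp (c * ω) * exp (c * ω * i) := by rw [exp_add]; ring
  · simp [indicator_of_notMem hi]

end PeriodicImpulses

lemma Tmap_apply_zero {m : ℕ} {θ : ℤ → ℝ} {k : Fin (m + 1) → ℝ} {I₀ : ℝ}
    {g₀ : (Fin m → ℝ) → ℝ} {g : Fin (m + 1) → ℝ → ℝ} {J₀ : ℝ → ℝ}
    {φ : ℝ → Fin (m + 1) → ℝ} {t : ℝ} :
    Tmap m θ k I₀ g₀ g J₀ φ t 0 =
      -expKernelIntegral (k 0) (fun s => g₀ fun i => φ s 0 - φ s i.succ) t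
        + impulseSum (k 0) θ (fun i => I₀ + J₀ (φ (θ i) 0)) t := by
  simp [Tmap, expKernelIntegral, impulseSum]

lemma Tmap_apply_of_ne_zero {m : ℕ} {θ : ℤ → ℝ} {k : Fin (m + 1) → ℝ} {I₀ : ℝ}
    {g₀ : (Fin m → ℝ) → ℝ} {g : Fin (m + 1) → ℝ → ℝ} {J₀ : ℝ → ℝ}
    {φ : ℝ → Fin (m + 1) → ℝ} {t : ℝ} {j : Fin (m + 1)} (hj : j ≠ 0) :
    Tmap m θ k I₀ g₀ g J₀ φ t j = expKernelIntegral (k j) (fun s => g j (φ s 0 - φ s j)) t := by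
  simp [Tmap, expKernelIntegral, hj]

theorem stmt15_general
    (m : ℕ) (ω : ℝ) (hω : 0 < ω) (θ : ℤ → ℝ)
    (hθ : ∀ i : ℤ, (i : ℝ) * ω ≤ θ i ∧ θ i < ((i : ℝ) + 1) * ω)
    (k : Fin (m + 1) → ℝ) (hk : ∀ j, 0 < k j) (I₀ : ℝ)
    (g₀ : (Fin m → ℝ) → ℝ) (g : Fin (m + 1) → ℝ → ℝ) (J₀ : ℝ → ℝ)
    (l : Fin (m + 1) → ℝ) (mc : Fin (m + 1) → ℝ) (mJ : ℝ)
    (hg₀lip : ∀ z w : Fin m → ℝ, |g₀ z - g₀ w| ≤ l 0 * eNorm (fun i => z i - w i))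
    (hglip : ∀ j, j ≠ 0 → ∀ a b : ℝ, |g j a - g j b| ≤ l j * |a - b|)
    (hg₀bd : ∀ z, |g₀ z| ≤ mc 0)
    (hgbd : ∀ j, j ≠ 0 → ∀ a, |g j a| ≤ mc j)
    (hJbd : ∀ a, |J₀ a| ≤ mJ)
    (φ : ℝ → Fin (m + 1) → ℝ) (hφmeas : Measurable φ)
    (hfix : ∀ t, φ t = Tmap m θ k I₀ g₀ g J₀ φ t) :
    (∀ j, j ≠ 0 → Continuous (fun t => φ t j)) ∧
    (∀ t : ℝ, ContinuousWithinAt (fun s => φ s 0) (Set.Iic t) t) ∧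
    (∀ t : ℝ, (∀ i : ℤ, t ≠ θ i) → ContinuousAt (fun s => φ s 0) t) ∧
    (∀ t : ℝ, (∀ i : ℤ, t ≠ θ i) →
      HasDerivAt (fun s => φ s 0)
        (-(k 0) * φ t 0 - g₀ (fun i => φ t 0 - φ t i.succ)) t ∧
      ∀ j, j ≠ 0 → HasDerivAt (fun s => φ s j)
        (-(k j) * φ t j + g j (φ t 0 - φ t j)) t) ∧
    (∀ i : ℤ, Filter.Tendsto (fun s => φ s 0) (nhdsWithin (θ i) (Set.Ioi (θ i)))
      (nhds (φ (θ i) 0 + (I₀ + J₀ (φ (θ i) 0))))) := by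
  have hθmono := strictMono_of_mem_Ico hθ
  have hcover := exists_mem_Ioc_of_mem_Ico hθ hω
  have hg₀ := continuous_of_abs_sub_le_mul_eNorm hg₀lip
  have hg : ∀ j, j ≠ 0 → Continuous (g j) := fun j hj =>
    continuous_of_abs_sub_le_mul_abs (hglip j hj)
  set h₀ := fun s => g₀ fun i => φ s 0 - φ s i.succ
  set a := fun i => I₀ + J₀ (φ (θ i) 0)
  have hφ₀_apply : ∀ t, φ t 0 = -expKernelIntegral (k 0) h₀ t + impulseSum (k 0) θ a t :=
    fun t => (congrFun (hfix t) 0).trans Tmap_apply_zero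
  have hφ₀ : (fun s => φ s 0) = -expKernelIntegral (k 0) h₀ + impulseSum (k 0) θ a :=
    funext hφ₀_apply
  have hφ : ∀ j, j ≠ 0 → (fun s => φ s j) = expKernelIntegral (k j) fun s => g j (φ s 0 - φ s j) :=
    fun j hj => funext fun s => (congrFun (hfix s) j).trans (Tmap_apply_of_ne_zero hj)
  have hF₀ := continuous_expKernelIntegral (h := h₀) (hk 0) (by fun_prop) fun s => hg₀bd _
  have hcont : ∀ j, j ≠ 0 → Continuous fun t => φ t j := fun j hj => by
    rw [hφ j hj]; exact continuous_expKernelIntegral (hk j) (by fun_prop) fun s => hgbd j hj _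
  have hcont₀ : ∀ t, (∀ i, t ≠ θ i) → ContinuousAt (fun s => φ s 0) t := fun t ht => by
    rw [hφ₀]
    exact hF₀.neg.continuousAt.add (hasDerivAt_impulseSum hθmono _ a hcover ht).continuousAt
  refine ⟨hcont, fun t => ?_, hcont₀, fun t ht => ⟨?_, fun j hj => ?_⟩, fun i => ?_⟩
  · rw [hφ₀]
    exact hF₀.neg.continuousWithinAt.add (continuousWithinAt_Iic_impulseSum hθmono _ a hcover t)
  · have hh₀t : ContinuousAt h₀ t := hg₀.continuousAt.comp
      (continuousAt_pi.2 fun i => (hcont₀ t ht).sub (hcont i.succ i.succ_ne_zero).continuousAt)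
    rw [hφ₀]
    refine ((hasDerivAt_expKernelIntegral (hk 0) (by fun_prop) (fun s => hg₀bd _) hh₀t).neg.add
      (hasDerivAt_impulseSum hθmono _ a hcover ht)).congr_deriv ?_
    change _ = _ - h₀ t
    linear_combination k 0 * hφ₀_apply t
  · simpa only [← hφ j hj] using hasDerivAt_expKernelIntegral (h := fun s => g j (φ s 0 - φ s j))
      (hk j) (by fun_prop) (fun s => hgbd j hj _)
      ((hg j hj).continuousAt.comp ((hcont₀ t ht).sub (hcont j hj).continuousAt))
  · have ha : ∀ i, |a i| ≤ |I₀| + mJ := fun i => (abs_add_le _ _).trans (by gcongr; exact hJbd _)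
    change Tendsto _ _ (𝓝 (φ (θ i) 0 + a i))
    rw [hφ₀_apply (θ i), add_assoc, hφ₀]
    exact (hF₀.neg.continuousAt.tendsto.mono_left nhdsWithin_le_nhds).add
      (tendsto_impulseSum_nhdsGT hθmono _ a
        (summable_indicator_Iic_exp_mul_mul hθ hω (hk 0) ha) i)

/-- A bounded measurable fixed point `φ = Tφ` of the integral equation is a
solution of the impulsive system (1): (a) each `φ_j` (`j = 1,…,m`) is continuous; (b) `φ₀` is
left-continuous everywhere and continuous off `{θ_i}`; (c) off `{θ_i}` the coordinates are
differentiable with `φ₀' = −k₀φ₀ − g₀(φ₀−φ₁,…,φ₀−φ_m)` and `φ_j' = −k_jφ_j + g_j(φ₀−φ_j)`;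
(d) at every `θ_i` the right limit of `φ₀` exists and equals `φ₀(θ_i) + I₀ + J₀(φ₀(θ_i))`. -/
theorem stmt15
    (m : ℕ) (hm : 1 ≤ m) (ω : ℝ) (hω : 0 < ω) (θ : ℤ → ℝ)
    (hθ : ∀ i : ℤ, (i : ℝ) * ω ≤ θ i ∧ θ i < ((i : ℝ) + 1) * ω)
    (k : Fin (m + 1) → ℝ) (hk : ∀ j, 0 < k j) (I₀ : ℝ) (hI : 0 < I₀)
    (g₀ : (Fin m → ℝ) → ℝ) (g : Fin (m + 1) → ℝ → ℝ) (J₀ : ℝ → ℝ)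
    (l : Fin (m + 1) → ℝ) (lJ : ℝ) (mc : Fin (m + 1) → ℝ) (mJ : ℝ)
    (hl : ∀ j, 0 ≤ l j) (hlJ : 0 ≤ lJ) (hmc : ∀ j, 0 ≤ mc j) (hmJ : 0 ≤ mJ)
    (hg₀lip : ∀ z w : Fin m → ℝ, |g₀ z - g₀ w| ≤ l 0 * eNorm (fun i => z i - w i))
    (hglip : ∀ j, j ≠ 0 → ∀ a b : ℝ, |g j a - g j b| ≤ l j * |a - b|)
    (hJlip : ∀ a b : ℝ, |J₀ a - J₀ b| ≤ lJ * |a - b|)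
    (hg₀bd : ∀ z, |g₀ z| ≤ mc 0)
    (hgbd : ∀ j, j ≠ 0 → ∀ a, |g j a| ≤ mc j)
    (hJbd : ∀ a, |J₀ a| ≤ mJ)
    (φ : ℝ → Fin (m + 1) → ℝ) (hφmeas : Measurable φ)
    (hφbd : ∃ B, ∀ t, eNorm (φ t) ≤ B)
    (hfix : ∀ t, φ t = Tmap m θ k I₀ g₀ g J₀ φ t) :
    (∀ j, j ≠ 0 → Continuous (fun t => φ t j)) ∧
    (∀ t : ℝ, ContinuousWithinAt (fun s => φ s 0) (Set.Iic t) t) ∧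
    (∀ t : ℝ, (∀ i : ℤ, t ≠ θ i) → ContinuousAt (fun s => φ s 0) t) ∧
    (∀ t : ℝ, (∀ i : ℤ, t ≠ θ i) →
      HasDerivAt (fun s => φ s 0)
        (-(k 0) * φ t 0 - g₀ (fun i => φ t 0 - φ t i.succ)) t ∧
      ∀ j, j ≠ 0 → HasDerivAt (fun s => φ s j)
        (-(k j) * φ t j + g j (φ t 0 - φ t j)) t) ∧
    (∀ i : ℤ, Filter.Tendsto (fun s => φ s 0) (nhdsWithin (θ i) (Set.Ioi (θ i)))
      (nhds (φ (θ i) 0 + (I₀ + J₀ (φ (θ i) 0))))) :=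
  stmt15_general m ω hω θ hθ k hk I₀ g₀ g J₀ l mc mJ hg₀lip hglip hg₀bd hgbd hJbd φ hφmeas hfix
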